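/- Assume f satisfies (f1) and (f2) with constant B ∈ [1,∞), and for ρ > 1 let φ(ρ) be the unique value > s₀ with F(φ(ρ)) = (B/4)·ρ·e^{−ρ+1}. Then for every σ > 0: φ(ρ) / (ρ−1)^{1 − 1/B + σ} → 0 as ρ → ∞. -/

import Mathlib

open MeasureTheory Filter

/-- `Fint f s = ∫_s^∞ dτ / f(τ)`. -/
noncomputable def Fint (f : ℝ → ℝ) (s : ℝ) : ℝ := ∫ τ in Set.Ioi s, 1 / f τ

/-- `1/B₁[f](s) = (−log F(s))·(1 − f'(s)·F(s))`, with `G` playing the role of `F`. -/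
noncomputable def invB1 (f G : ℝ → ℝ) (s : ℝ) : ℝ :=
  (-Real.log (G s)) * (1 - deriv f s * G s)

/-- `1/B₂[f](s) = f'(s)·F(s)·(log F(s))²·(f(s)·f''(s)·F(s)/f'(s) − 1)`,
with `G` playing the role of `F`. -/
noncomputable def invB2 (f G : ℝ → ℝ) (s : ℝ) : ℝ :=
  deriv f s * G s * (Real.log (G s)) ^ 2 *
    (f s * deriv (deriv f) s * G s / deriv f s - 1)

/-- The model singular solution `v`. -/
noncomputable def modelv (B t : ℝ) : ℝ :=
  if B = 1 then Real.log (-2 * Real.log t) else (-2 * Real.log t) ^ ((B - 1) / B)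

/-- The model nonlinearity `g`. -/
noncomputable def modelg (B s : ℝ) : ℝ :=
  if B = 1 then 4 * Real.exp (Real.exp s - 2 * s)
  else (4 / (B * (B / (B - 1)))) * s ^ (1 - 2 * (B / (B - 1))) * Real.exp (s ^ (B / (B - 1)))

/-- The model function `G(s) = ∫_s^∞ dτ/g(τ)` in closed form. -/
noncomputable def modelG (B s : ℝ) : ℝ :=
  if B = 1 then (1 / 4) * (Real.exp s + 1) * Real.exp (-Real.exp s)
  else (B / 4) * (s ^ (B / (B - 1)) + 1) * Real.exp (-(s ^ (B / (B - 1))))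

/-- The Emden–Fowler model profile `ψ`. -/
noncomputable def modelpsi (B ρ : ℝ) : ℝ :=
  if B = 1 then Real.log (ρ - 1) else (ρ - 1) ^ ((B - 1) / B)

open Set Topology Asymptotics

/-!
Write `L = -log F`, so that `L' = 1 / (f F)` and `(f' F)' = (1/B₂[f]) · L' / L²`. For `q < 1/B`
the function `f' F + q / L` is therefore eventually nondecreasing, and it tends to `1`; hence
`1 - f' F ≥ q / L`, which says exactly that `log L' - q log L` is eventually nondecreasing, i.e.
`L' ≥ k L^q`. Integrating this differential inequality gives `s = O(L(s)^(1 - q))`. Since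
`L(φ(ρ)) = ρ - 1 - log (B ρ / 4) ≤ ρ - 1`, we get `φ(ρ) = O((ρ - 1)^(1 - q))`, and `q = 1/B - σ/2`
gives the claim.
-/

theorem isLittleO_rpow_rpow_atTop {p r : ℝ} (hpr : p < r) :
    (fun x : ℝ => x ^ p) =o[atTop] fun x => x ^ r := by
  refine (isLittleO_iff_tendsto' ?_).mpr ?_
  · filter_upwards [eventually_gt_atTop 0] with x hx hxr
    exact absurd hxr (Real.rpow_pos_of_pos hx r).ne'
  · refine (tendsto_rpow_neg_atTop (sub_pos.mpr hpr)).congr' ?_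
    filter_upwards [eventually_gt_atTop 0] with x hx
    rw [← Real.rpow_sub hx, neg_sub]

theorem monotoneOn_Ici_of_hasDerivAt_nonneg {g g' : ℝ → ℝ} {a : ℝ}
    (hg : ∀ s, a ≤ s → HasDerivAt g (g' s) s) (hg' : ∀ s, a ≤ s → 0 ≤ g' s) :
    MonotoneOn g (Ici a) :=
  monotoneOn_of_hasDerivWithinAt_nonneg (convex_Ici a)
    (fun s hs => (hg s hs).continuousAt.continuousWithinAt)
    (fun s hs => (hg s (interior_subset hs)).hasDerivWithinAt)
    (fun s hs => hg' s (interior_subset hs))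

theorem mul_sub_le_rpow_of_hasDerivAt {L l : ℝ → ℝ} {a k q : ℝ} (hq : q < 1)
    (hL : ∀ s, a ≤ s → HasDerivAt L (l s) s) (hLpos : ∀ s, a ≤ s → 0 < L s)
    (hl : ∀ s, a ≤ s → k * L s ^ q ≤ l s) {s : ℝ} (hs : a ≤ s) :
    (1 - q) * k * (s - a) ≤ L s ^ (1 - q) := by
  have hmono : MonotoneOn (fun s => L s ^ (1 - q) - (1 - q) * k * s) (Ici a) := by
    refine monotoneOn_Ici_of_hasDerivAt_nonneg
      (fun s hs => ((hL s hs).rpow_const (Or.inl (hLpos s hs).ne')).sub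
        ((hasDerivAt_id s).const_mul ((1 - q) * k))) fun s hs => ?_
    have hLq : L s ^ q * L s ^ (1 - q - 1) = 1 := by
      rw [← Real.rpow_add (hLpos s hs)]; simp
    have := mul_le_mul_of_nonneg_left (hl s hs)
      (mul_nonneg (sub_pos.mpr hq).le (Real.rpow_nonneg (hLpos s hs).le (1 - q - 1)))
    linear_combination this - (1 - q) * k * hLq
  have hRs : L a ^ (1 - q) - (1 - q) * k * a ≤ L s ^ (1 - q) - (1 - q) * k * s :=
    hmono self_mem_Ici hs hs
  linarith [Real.rpow_nonneg (hLpos a le_rfl).le (1 - q)]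

section Fint

variable {f : ℝ → ℝ} {s₀ : ℝ}

theorem Fint_eq_intervalIntegral_add
    (hfint : ∀ s, s₀ < s → IntegrableOn (fun τ => 1 / f τ) (Ioi s))
    {y x : ℝ} (hy : s₀ < y) (hyx : y ≤ x) :
    Fint f y = (∫ τ in y..x, 1 / f τ) + Fint f x :=
  (intervalIntegral.integral_interval_add_Ioi (hfint y hy) (hfint x (hy.trans_le hyx))).symm

theorem Fint_pos (hfpos : ∀ s, s₀ < s → 0 < f s)
    (hfint : ∀ s, s₀ < s → IntegrableOn (fun τ => 1 / f τ) (Ioi s))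
    {s : ℝ} (hs : s₀ < s) : 0 < Fint f s := by
  have hsupp : Function.support (fun τ => 1 / f τ) ∩ Ioi s = Ioi s :=
    inter_eq_right.mpr fun τ hτ => (one_div_pos.mpr (hfpos τ (hs.trans hτ))).ne'
  rw [Fint, setIntegral_pos_iff_support_of_nonneg_ae _ (hfint s hs), hsupp, Real.volume_Ioi]
  · exact ENNReal.zero_lt_top
  · filter_upwards [ae_restrict_mem measurableSet_Ioi] with τ hτ
    exact (one_div_pos.mpr (hfpos τ (hs.trans hτ))).le

theorem antitoneOn_Fint (hfpos : ∀ s, s₀ < s → 0 < f s)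
    (hfint : ∀ s, s₀ < s → IntegrableOn (fun τ => 1 / f τ) (Ioi s)) :
    AntitoneOn (Fint f) (Ioi s₀) := by
  intro y hy x _ hyx
  rw [Fint_eq_intervalIntegral_add hfint hy hyx, le_add_iff_nonneg_left]
  refine intervalIntegral.integral_nonneg hyx fun τ hτ => ?_
  exact (one_div_pos.mpr (hfpos τ (lt_of_lt_of_le hy hτ.1))).le

theorem tendsto_Fint_atTop
    (hfint : ∀ s, s₀ < s → IntegrableOn (fun τ => 1 / f τ) (Ioi s)) :
    Tendsto (Fint f) atTop (𝓝 0) := by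
  have ha : s₀ < s₀ + 1 := lt_add_one s₀
  have h := (intervalIntegral_tendsto_integral_Ioi (s₀ + 1) (hfint _ ha) tendsto_id).const_sub
    (Fint f (s₀ + 1))
  rw [Fint, sub_self] at h
  refine h.congr' ?_
  filter_upwards [eventually_ge_atTop (s₀ + 1)] with x hx
  rw [← Fint, Fint_eq_intervalIntegral_add hfint ha hx, id, add_sub_cancel_left]

theorem hasDerivAt_Fint (hf : ContinuousOn f (Ioi s₀)) (hfpos : ∀ s, s₀ < s → 0 < f s)
    (hfint : ∀ s, s₀ < s → IntegrableOn (fun τ => 1 / f τ) (Ioi s)) {s : ℝ} (hs : s₀ < s) :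
    HasDerivAt (Fint f) (-(1 / f s)) s := by
  obtain ⟨y, hy, hys⟩ := exists_between hs
  have hcont : ContinuousOn (fun τ => 1 / f τ) (Ioi s₀) :=
    continuousOn_const.div hf fun τ hτ => (hfpos τ hτ).ne'
  have hint : IntervalIntegrable (fun τ => 1 / f τ) volume y s :=
    (hcont.mono fun τ hτ => hy.trans_le (by simpa [hys.le] using hτ.1)).intervalIntegrable
  have hderiv := (intervalIntegral.integral_hasDerivAt_right hint
    (hcont.stronglyMeasurableAtFilter isOpen_Ioi s hs)
    (hcont.continuousAt (Ioi_mem_nhds hs))).const_sub (Fint f y)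
  refine hderiv.congr_of_eventuallyEq ?_
  filter_upwards [Ioi_mem_nhds hys] with x hx
  rw [Fint_eq_intervalIntegral_add hfint hy (le_of_lt hx), add_sub_cancel_left]

theorem tendsto_atTop_of_tendsto_Fint_comp {α : Type*} {l : Filter α} {g : α → ℝ}
    (hfpos : ∀ s, s₀ < s → 0 < f s)
    (hfint : ∀ s, s₀ < s → IntegrableOn (fun τ => 1 / f τ) (Ioi s))
    (hg : ∀ᶠ x in l, s₀ < g x) (hFg : Tendsto (fun x => Fint f (g x)) l (𝓝 0)) :
    Tendsto g l atTop := by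
  refine tendsto_atTop.mpr fun T => ?_
  have hT : s₀ < max T (s₀ + 1) := lt_max_of_lt_right (lt_add_one s₀)
  filter_upwards [hg, hFg.eventually (gt_mem_nhds (Fint_pos hfpos hfint hT))] with x hgx hFx
  by_contra! hlt
  exact hFx.not_ge (antitoneOn_Fint hfpos hfint hgx hT (hlt.trans_le (le_max_left _ _)).le)

end Fint

noncomputable def negLogFint (f : ℝ → ℝ) (s : ℝ) : ℝ := -Real.log (Fint f s)

section negLogFint

variable {f : ℝ → ℝ} {s₀ : ℝ}

theorem hasDerivAt_negLogFint (hf : ContinuousOn f (Ioi s₀)) (hfpos : ∀ s, s₀ < s → 0 < f s)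
    (hfint : ∀ s, s₀ < s → IntegrableOn (fun τ => 1 / f τ) (Ioi s)) {s : ℝ} (hs : s₀ < s) :
    HasDerivAt (negLogFint f) (1 / (f s * Fint f s)) s := by
  have hF := Fint_pos hfpos hfint hs
  refine (((hasDerivAt_Fint hf hfpos hfint hs).log hF.ne').neg).congr_deriv ?_
  have := (hfpos s hs).ne'
  field_simp

theorem tendsto_negLogFint_atTop (hfpos : ∀ s, s₀ < s → 0 < f s)
    (hfint : ∀ s, s₀ < s → IntegrableOn (fun τ => 1 / f τ) (Ioi s)) :
    Tendsto (negLogFint f) atTop atTop := by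
  have hF : Tendsto (Fint f) atTop (𝓝[>] 0) :=
    tendsto_nhdsWithin_of_tendsto_nhds_of_eventually_within _ (tendsto_Fint_atTop hfint)
      ((eventually_gt_atTop s₀).mono fun s hs => Fint_pos hfpos hfint hs)
  exact tendsto_neg_atBot_atTop.comp (Real.tendsto_log_nhdsGT_zero.comp hF)

theorem hasDerivAt_deriv_mul_Fint (hf : ContDiffOn ℝ 2 f (Ioi s₀))
    (hfpos : ∀ s, s₀ < s → 0 < f s) (hf' : ∀ s, s₀ < s → 0 < deriv f s)
    (hfint : ∀ s, s₀ < s → IntegrableOn (fun τ => 1 / f τ) (Ioi s)) {s : ℝ} (hs : s₀ < s)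
    (hL : negLogFint f s ≠ 0) :
    HasDerivAt (fun s => deriv f s * Fint f s)
      (invB2 f (Fint f) s / (negLogFint f s ^ 2 * (f s * Fint f s))) s := by
  have hd : ContDiffOn ℝ 1 (deriv f) (Ioi s₀) :=
    ((contDiffOn_succ_iff_deriv_of_isOpen isOpen_Ioi).mp hf).2.2
  have hd2 : HasDerivAt (deriv f) (deriv (deriv f) s) s :=
    ((hd.differentiableOn one_ne_zero).differentiableAt (Ioi_mem_nhds hs)).hasDerivAt
  refine (hd2.mul (hasDerivAt_Fint hf.continuousOn hfpos hfint hs)).congr_deriv ?_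
  have := (hfpos s hs).ne'
  have := (Fint_pos hfpos hfint hs).ne'
  have := (hf' s hs).ne'
  rw [negLogFint, neg_ne_zero] at hL
  rw [invB2, negLogFint, neg_sq]
  field_simp
  ring

theorem eventually_deriv_mul_Fint_add_div_le_one (hf : ContDiffOn ℝ 2 f (Ioi s₀))
    (hfpos : ∀ s, s₀ < s → 0 < f s) (hf' : ∀ s, s₀ < s → 0 < deriv f s)
    (hfint : ∀ s, s₀ < s → IntegrableOn (fun τ => 1 / f τ) (Ioi s))
    (hf2a : Tendsto (fun s => deriv f s * Fint f s) atTop (𝓝 1)) {q : ℝ}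
    (hq : ∀ᶠ s in atTop, q ≤ invB2 f (Fint f) s) :
    ∀ᶠ s in atTop, deriv f s * Fint f s + q / negLogFint f s ≤ 1 := by
  have hL := tendsto_negLogFint_atTop hfpos hfint
  obtain ⟨a, ha⟩ := eventually_atTop.mp
    ((eventually_gt_atTop s₀).and ((hL.eventually_gt_atTop 0).and hq))
  have hmono : MonotoneOn (fun s => deriv f s * Fint f s + q / negLogFint f s) (Ici a) := by
    refine monotoneOn_Ici_of_hasDerivAt_nonneg
      (g' := fun s => (invB2 f (Fint f) s - q) / (negLogFint f s ^ 2 * (f s * Fint f s)))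
      (fun s hs => ?_) fun s hs => ?_
    · obtain ⟨hs₀, hLs, -⟩ := ha s hs
      refine ((hasDerivAt_deriv_mul_Fint hf hfpos hf' hfint hs₀ hLs.ne').add
        (((hasDerivAt_negLogFint hf.continuousOn hfpos hfint hs₀).inv hLs.ne').const_mul
          q)).congr_deriv ?_
      have := (Fint_pos hfpos hfint hs₀).ne'
      have := (hfpos s hs₀).ne'
      field_simp
      ring
    · obtain ⟨hs₀, hLs, hqs⟩ := ha s hs
      have := Fint_pos hfpos hfint hs₀
      have := hfpos s hs₀
      exact div_nonneg (sub_nonneg.mpr hqs) (by positivity)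
  have hlim : Tendsto (fun s => deriv f s * Fint f s + q / negLogFint f s) atTop (𝓝 1) := by
    simpa using hf2a.add (tendsto_const_nhds.div_atTop hL)
  filter_upwards [eventually_ge_atTop a] with s hs
  exact ge_of_tendsto hlim ((eventually_ge_atTop s).mono fun t hst =>
    hmono hs (hs.trans hst) hst)

theorem exists_pos_mul_rpow_le_one_div_mul_Fint (hf : DifferentiableOn ℝ f (Ioi s₀))
    (hfpos : ∀ s, s₀ < s → 0 < f s)
    (hfint : ∀ s, s₀ < s → IntegrableOn (fun τ => 1 / f τ) (Ioi s)) {q : ℝ}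
    (hu : ∀ᶠ s in atTop, deriv f s * Fint f s + q / negLogFint f s ≤ 1) :
    ∃ k > 0, ∀ᶠ s in atTop, k * negLogFint f s ^ q ≤ 1 / (f s * Fint f s) := by
  obtain ⟨a, ha⟩ := eventually_atTop.mp ((eventually_gt_atTop s₀).and
    (((tendsto_negLogFint_atTop hfpos hfint).eventually_gt_atTop 0).and hu))
  have hfF : ∀ s, a ≤ s → 0 < f s * Fint f s := fun s hs =>
    mul_pos (hfpos s (ha s hs).1) (Fint_pos hfpos hfint (ha s hs).1)
  set M : ℝ → ℝ := fun s => -Real.log (f s * Fint f s) - q * Real.log (negLogFint f s)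
  have hmono : MonotoneOn M (Ici a) := by
    refine monotoneOn_Ici_of_hasDerivAt_nonneg
      (g' := fun s => (1 - deriv f s * Fint f s - q / negLogFint f s) / (f s * Fint f s))
      (fun s hs => ?_) fun s hs => ?_
    · obtain ⟨hs₀, hLs, -⟩ := ha s hs
      have hfd := (hf.differentiableAt (Ioi_mem_nhds hs₀)).hasDerivAt
      refine ((hfd.mul (hasDerivAt_Fint hf.continuousOn hfpos hfint hs₀)).log
        (hfF s hs).ne').neg.sub
        (((hasDerivAt_negLogFint hf.continuousOn hfpos hfint hs₀).log hLs.ne').const_mul q)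
        |>.congr_deriv ?_
      have := (Fint_pos hfpos hfint hs₀).ne'
      have := (hfpos s hs₀).ne'
      simp only [Pi.mul_apply]
      field_simp
      ring
    · exact div_nonneg (by linarith [(ha s hs).2.2]) (hfF s hs).le
  refine ⟨Real.exp (M a), Real.exp_pos _, ?_⟩
  filter_upwards [eventually_ge_atTop a] with s hs
  have hLs := (ha s hs).2.1
  calc Real.exp (M a) * negLogFint f s ^ q
      ≤ Real.exp (M s) * negLogFint f s ^ q := by
        have := Real.rpow_nonneg hLs.le q
        gcongr
        exact hmono self_mem_Ici hs hs
    _ = 1 / (f s * Fint f s) := by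
      rw [Real.exp_sub, Real.exp_neg, Real.exp_log (hfF s hs), mul_comm q,
        ← Real.rpow_def_of_pos hLs]
      field_simp

theorem isBigO_id_negLogFint_rpow (hf : DifferentiableOn ℝ f (Ioi s₀))
    (hfpos : ∀ s, s₀ < s → 0 < f s)
    (hfint : ∀ s, s₀ < s → IntegrableOn (fun τ => 1 / f τ) (Ioi s)) {q : ℝ} (hq : q < 1)
    (hu : ∀ᶠ s in atTop, deriv f s * Fint f s + q / negLogFint f s ≤ 1) :
    (fun s => s) =O[atTop] fun s => negLogFint f s ^ (1 - q) := by
  obtain ⟨k, hk, hkl⟩ := exists_pos_mul_rpow_le_one_div_mul_Fint hf hfpos hfint hu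
  obtain ⟨a, ha⟩ := eventually_atTop.mp ((eventually_gt_atTop s₀).and
    (((tendsto_negLogFint_atTop hfpos hfint).eventually_gt_atTop 0).and hkl))
  have hgrowth : ∀ s, a ≤ s → (1 - q) * k * (s - a) ≤ negLogFint f s ^ (1 - q) :=
    fun s hs => mul_sub_le_rpow_of_hasDerivAt hq
      (fun s hs => hasDerivAt_negLogFint hf.continuousOn hfpos hfint (ha s hs).1)
      (fun s hs => (ha s hs).2.1) (fun s hs => (ha s hs).2.2) hs
  have hcoef : 0 < (1 - q) * k := mul_pos (sub_pos.mpr hq) hk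
  refine IsBigO.of_bound (2 / ((1 - q) * k)) ?_
  filter_upwards [eventually_ge_atTop (max (2 * a) 0)] with s hs
  have hsa : 2 * a ≤ s := le_of_max_le_left hs
  have hs0 : 0 ≤ s := le_of_max_le_right hs
  have hgs := hgrowth s (by linarith)
  rw [Real.norm_of_nonneg hs0, Real.norm_of_nonneg (by nlinarith), div_mul_eq_mul_div,
    le_div_iff₀ hcoef]
  nlinarith

end negLogFint

theorem tendsto_mul_mul_exp_neg_add_one (c : ℝ) :
    Tendsto (fun ρ => c * ρ * Real.exp (-ρ + 1)) atTop (𝓝 0) := by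
  have h := (Real.tendsto_pow_mul_exp_neg_atTop_nhds_zero 1).const_mul (c * Real.exp 1)
  rw [mul_zero] at h
  refine h.congr fun ρ => ?_
  rw [Real.exp_add, pow_one]
  ring

theorem negLogFint_le_sub_one {f : ℝ → ℝ} {x B ρ : ℝ} (hB : 0 < B) (hρ : 4 / B ≤ ρ)
    (hx : Fint f x = (B / 4) * ρ * Real.exp (-ρ + 1)) : negLogFint f x ≤ ρ - 1 := by
  have hBρ : 1 ≤ B / 4 * ρ := by
    rw [div_le_iff₀ hB] at hρ
    linarith
  rw [negLogFint, hx, Real.log_mul (by positivity) (Real.exp_ne_zero _), Real.log_exp]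
  linarith [Real.log_nonneg hBρ]

theorem stmt11_general (f φ : ℝ → ℝ) (s₀ B : ℝ)
    (hf : ContDiffOn ℝ 2 f (Set.Ioi s₀))
    (hfpos : ∀ s, s₀ < s → 0 < f s)
    (hf' : ∀ s, s₀ < s → 0 < deriv f s)
    (hfint : ∀ s, s₀ < s → IntegrableOn (fun τ => 1 / f τ) (Set.Ioi s))
    (hB : 1 ≤ B)
    (hf2a : Tendsto (fun s => deriv f s * Fint f s) atTop (nhds 1))
    (hf2b : Tendsto (fun s => invB2 f (Fint f) s) atTop (nhds (1 / B)))
    (hφ : ∀ ρ > (1 : ℝ), s₀ < φ ρ ∧ Fint f (φ ρ) = (B / 4) * ρ * Real.exp (-ρ + 1)) :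
    ∀ σ > (0 : ℝ),
      Tendsto (fun ρ => φ ρ / (ρ - 1) ^ (1 - 1 / B + σ)) atTop (nhds 0) := by
  intro σ hσ
  set q : ℝ := 1 / B - σ / 2 with hq
  have hB0 : 0 < B := by linarith
  have hB1 : 1 / B ≤ 1 := (div_le_one hB0).mpr hB
  have hu := eventually_deriv_mul_Fint_add_div_le_one hf hfpos hf' hfint hf2a
    (hf2b.eventually (eventually_ge_nhds (show q < 1 / B by linarith)))
  have hφs₀ : ∀ᶠ ρ in atTop, s₀ < φ ρ := (eventually_gt_atTop 1).mono fun ρ hρ => (hφ ρ hρ).1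
  have hφF : ∀ᶠ ρ in atTop, Fint f (φ ρ) = (B / 4) * ρ * Real.exp (-ρ + 1) :=
    (eventually_gt_atTop 1).mono fun ρ hρ => (hφ ρ hρ).2
  have hφtop : Tendsto φ atTop atTop := tendsto_atTop_of_tendsto_Fint_comp hfpos hfint hφs₀
    ((tendsto_mul_mul_exp_neg_add_one (B / 4)).congr' (hφF.mono fun _ h => h.symm))
  have hφL : φ =O[atTop] fun ρ => negLogFint f (φ ρ) ^ (1 - q) :=
    (isBigO_id_negLogFint_rpow (hf.differentiableOn (by norm_num)) hfpos hfint (by linarith)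
      hu).comp_tendsto hφtop
  have hLρ : (fun ρ => negLogFint f (φ ρ) ^ (1 - q)) =O[atTop] fun ρ => (ρ - 1) ^ (1 - q) := by
    refine IsBigO.of_bound 1 ?_
    filter_upwards [hφF, eventually_ge_atTop (4 / B),
      hφtop.eventually ((tendsto_negLogFint_atTop hfpos hfint).eventually_ge_atTop 0)]
      with ρ hρF hρ hL
    have hle := negLogFint_le_sub_one hB0 hρ hρF
    rw [one_mul, Real.norm_of_nonneg (Real.rpow_nonneg hL _),
      Real.norm_of_nonneg (Real.rpow_nonneg (hL.trans hle) _)]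
    exact Real.rpow_le_rpow hL hle (by linarith)
  have hρ : (fun ρ : ℝ => (ρ - 1) ^ (1 - q)) =o[atTop] fun ρ => (ρ - 1) ^ (1 - 1 / B + σ) :=
    (isLittleO_rpow_rpow_atTop (by linarith)).comp_tendsto
      (tendsto_atTop_add_const_right atTop (-1) tendsto_id)
  exact (hφL.trans_isLittleO (hLρ.trans_isLittleO hρ)).tendsto_div_nhds_zero

/-- Growth estimate for the singular profile: for every `σ > 0`,
`φ(ρ) / (ρ−1)^{1−1/B+σ} → 0` as `ρ → ∞`. -/
theorem stmt11 (f φ : ℝ → ℝ) (s₀ B : ℝ) (hs₀ : 0 < s₀)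
    (hf : ContDiffOn ℝ 2 f (Set.Ioi s₀))
    (hfpos : ∀ s, s₀ < s → 0 < f s)
    (hf' : ∀ s, s₀ < s → 0 < deriv f s)
    (hfint : ∀ s, s₀ < s → IntegrableOn (fun τ => 1 / f τ) (Set.Ioi s))
    (hB : 1 ≤ B)
    (hf2a : Tendsto (fun s => deriv f s * Fint f s) atTop (nhds 1))
    (hf2b : Tendsto (fun s => invB2 f (Fint f) s) atTop (nhds (1 / B)))
    (hφ : ∀ ρ > (1 : ℝ), s₀ < φ ρ ∧ Fint f (φ ρ) = (B / 4) * ρ * Real.exp (-ρ + 1)) :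
    ∀ σ > (0 : ℝ),
      Tendsto (fun ρ => φ ρ / (ρ - 1) ^ (1 - 1 / B + σ)) atTop (nhds 0) :=
  stmt11_general f φ s₀ B hf hfpos hf' hfint hB hf2a hf2b hφ
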